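/- Let r > 0, let B_r = {(i,j) ∈ ℤ² : i² + j² ≤ r²} be the discrete ball of radius r, let b_{ij}(r) = Σ_{(k,l)∈B_r} k^i l^j, and set b(r) = Σ_{(i,j)∈B_r} j², α(r) = −2 b_{20}(r)/b_{00}(r), and β(r) = (1/2)(b_{40}(r) + b_{22}(r) − 2 b_{20}(r)²/b_{00}(r)). Let (η_{ij})_{(i,j)∈B_r} be an independent family of real random variables each with Gaussian law of mean 0 and variance σ² > 0. Define D_x = (1/b(r)) Σ_{(i,j)∈B_r} j η_{ij}, D_y = (1/b(r)) Σ_{(i,j)∈B_r} i η_{ij}, and L = (1/β(r)) Σ_{(i,j)∈B_r} (α(r) + i² + j²) η_{ij}. Then D_x, D_y and L are pairwise uncorrelated (all three covariances are zero), D_x and D_y each have variance σ²/b(r), and L has variance V(r,σ) = (σ²/β(r)²) Σ_{(i,j)∈B_r} (α(r) + i² + j²)². -/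

import Mathlib

open MeasureTheory ProbabilityTheory
open scoped NNReal ENNReal

/-- The discrete ball of radius `r`: `B_r = {(i,j) ∈ ℤ² : i² + j² ≤ r²}`. -/
noncomputable def discBall (r : ℝ) : Finset (ℤ × ℤ) :=
  (Finset.Icc (-⌈r⌉, -⌈r⌉) (⌈r⌉, ⌈r⌉)).filter
    fun p => ((p.1 : ℝ) ^ 2 + (p.2 : ℝ) ^ 2 ≤ r ^ 2)

/-- The discrete moments `b_{ij}(r) = Σ_{(k,l)∈B_r} k^i l^j`. -/
noncomputable def dbij (r : ℝ) (i j : ℕ) : ℝ :=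
  ∑ p ∈ discBall r, (p.1 : ℝ) ^ i * (p.2 : ℝ) ^ j

/-- `b(r) = Σ_{(i,j)∈B_r} j²`. -/
noncomputable def db (r : ℝ) : ℝ := ∑ p ∈ discBall r, (p.2 : ℝ) ^ 2

/-- `α(r) = −2 b₂₀(r)/b₀₀(r)`. -/
noncomputable def dalpha (r : ℝ) : ℝ := -(2 * dbij r 2 0 / dbij r 0 0)

/-- `β(r) = (1/2)(b₄₀(r) + b₂₂(r) − 2 b₂₀(r)²/b₀₀(r))`. -/
noncomputable def dbeta (r : ℝ) : ℝ :=
  (1 / 2) * (dbij r 4 0 + dbij r 2 2 - 2 * (dbij r 2 0) ^ 2 / dbij r 0 0)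

section Aux

open Real

lemma mem_discBall {r : ℝ} {p : ℤ × ℤ} :
    p ∈ discBall r ↔ (-⌈r⌉ ≤ p.1 ∧ -⌈r⌉ ≤ p.2 ∧ p.1 ≤ ⌈r⌉ ∧ p.2 ≤ ⌈r⌉) ∧
      (p.1 : ℝ) ^ 2 + (p.2 : ℝ) ^ 2 ≤ r ^ 2 := by
  simp [discBall, Finset.mem_Icc, Prod.le_def, and_assoc]

lemma discBall_negSnd {r : ℝ} {p : ℤ × ℤ} (hp : p ∈ discBall r) :
    (p.1, -p.2) ∈ discBall r := by
  rw [mem_discBall] at hp ⊢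
  refine ⟨by omega, ?_⟩
  push_cast
  simpa using hp.2

lemma discBall_negFst {r : ℝ} {p : ℤ × ℤ} (hp : p ∈ discBall r) :
    (-p.1, p.2) ∈ discBall r := by
  rw [mem_discBall] at hp ⊢
  refine ⟨by omega, ?_⟩
  push_cast
  simpa using hp.2

lemma discBall_swap {r : ℝ} {p : ℤ × ℤ} (hp : p ∈ discBall r) :
    (p.2, p.1) ∈ discBall r := by
  rw [mem_discBall] at hp ⊢
  refine ⟨by omega, ?_⟩
  linarith [hp.2]

lemma sum_discBall_oddSnd {r : ℝ} (f : ℤ × ℤ → ℝ)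
    (hf : ∀ p : ℤ × ℤ, f (p.1, -p.2) = -f p) :
    ∑ p ∈ discBall r, f p = 0 := by
  have h : ∑ p ∈ discBall r, f p = ∑ p ∈ discBall r, (-f p) := by
    refine Finset.sum_nbij' (fun p => (p.1, -p.2)) (fun p => (p.1, -p.2))
      (fun p hp => discBall_negSnd hp) (fun p hp => discBall_negSnd hp)
      (fun p _ => by simp) (fun p _ => by simp) (fun p _ => ?_)
    rw [hf p, neg_neg]
  have h2 : ∑ p ∈ discBall r, (-f p) = -∑ p ∈ discBall r, f p := by simp
  rw [h2] at h
  linarith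

lemma sum_discBall_oddFst {r : ℝ} (f : ℤ × ℤ → ℝ)
    (hf : ∀ p : ℤ × ℤ, f (-p.1, p.2) = -f p) :
    ∑ p ∈ discBall r, f p = 0 := by
  have h : ∑ p ∈ discBall r, f p = ∑ p ∈ discBall r, (-f p) := by
    refine Finset.sum_nbij' (fun p => (-p.1, p.2)) (fun p => (-p.1, p.2))
      (fun p hp => discBall_negFst hp) (fun p hp => discBall_negFst hp)
      (fun p _ => by simp) (fun p _ => by simp) (fun p _ => ?_)
    rw [hf p, neg_neg]
  have h2 : ∑ p ∈ discBall r, (-f p) = -∑ p ∈ discBall r, f p := by simp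
  rw [h2] at h
  linarith

lemma sum_discBall_swap {r : ℝ} (f : ℤ × ℤ → ℝ) :
    ∑ p ∈ discBall r, f p = ∑ p ∈ discBall r, f (p.2, p.1) := by
  refine Finset.sum_nbij' (fun p => (p.2, p.1)) (fun p => (p.2, p.1))
    (fun p hp => discBall_swap hp) (fun p hp => discBall_swap hp)
    (fun p _ => by simp) (fun p _ => by simp) (fun p _ => by simp)

/-! ### Gaussian moment lemmas -/

lemma h2rpow (x : ℝ) : x ^ (2:ℝ) = x ^ 2 := by
  rw [show (2:ℝ) = ((2:ℕ):ℝ) by norm_num, Real.rpow_natCast]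

lemma integrable_sq_gaussianReal {v : ℝ≥0} (hv : v ≠ 0) :
    Integrable (fun x : ℝ => x ^ 2) (gaussianReal 0 v) := by
  have hv0 : (0:ℝ) < (v:ℝ) := NNReal.coe_pos.mpr (pos_iff_ne_zero.mpr hv)
  rw [gaussianReal_of_var_ne_zero _ hv,
    integrable_withDensity_iff (measurable_gaussianPDF _ _)
      (ae_of_all _ fun x => ENNReal.ofReal_lt_top)]
  have hb : (0:ℝ) < (2 * (v:ℝ))⁻¹ := by positivity
  have heq : (fun x : ℝ => x ^ 2 * (gaussianPDF 0 v x).toReal)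
      = fun x : ℝ => (√(2 * π * v))⁻¹ * (x ^ (2:ℝ) * Real.exp (-(2 * (v:ℝ))⁻¹ * x ^ 2)) := by
    ext x
    rw [gaussianPDF, ENNReal.toReal_ofReal (gaussianPDFReal_nonneg _ _ _), gaussianPDFReal,
      h2rpow x, sub_zero, div_eq_mul_inv]
    ring_nf
  rw [heq]
  exact (integrable_rpow_mul_exp_neg_mul_sq hb (by norm_num)).const_mul _

lemma integral_id_gaussianReal (v : ℝ≥0) : ∫ x, x ∂(gaussianReal 0 v) = 0 := by
  have hmap : (gaussianReal 0 v).map (fun x : ℝ => -1 * x) = gaussianReal 0 v := by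
    have hone : (⟨(-1:ℝ) ^ 2, sq_nonneg _⟩ : ℝ≥0) = 1 := NNReal.coe_injective (by norm_num; rfl)
    rw [gaussianReal_map_const_mul]
    congr 1
    · norm_num
    · ext; simp
  have h : ∫ x, x ∂(gaussianReal 0 v)
      = ∫ x, (-1 : ℝ) * x ∂(gaussianReal 0 v) := by
    conv_lhs => rw [← hmap]
    rw [integral_map (f := fun x : ℝ => x)
      ((by fun_prop : Measurable fun x : ℝ => -1 * x)).aemeasurable
      measurable_id.aestronglyMeasurable]
  simp only [neg_one_mul] at h
  rw [integral_neg] at h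
  linarith

lemma integral_sq_gaussianReal {v : ℝ≥0} (hv : v ≠ 0) :
    ∫ x, x ^ 2 ∂(gaussianReal 0 v) = v := by
  have hv0 : (0:ℝ) < (v:ℝ) := NNReal.coe_pos.mpr (pos_iff_ne_zero.mpr hv)
  set A : ℝ := 2 * (v:ℝ) with hA
  have hA0 : (0:ℝ) < A := by positivity
  have hb : (0:ℝ) < A⁻¹ := by positivity
  rw [gaussianReal_of_var_ne_zero _ hv]
  have hpdf : gaussianPDF 0 v
      = fun x => ((Real.toNNReal (gaussianPDFReal 0 v x) : ℝ≥0) : ℝ≥0∞) := rfl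
  rw [hpdf, integral_withDensity_eq_integral_smul
    ((measurable_gaussianPDFReal 0 v).real_toNNReal) (fun x => x ^ 2)]
  have hsmul : (fun x : ℝ => (Real.toNNReal (gaussianPDFReal 0 v x)) • x ^ 2)
      = fun x : ℝ => (√(2 * π * v))⁻¹ * (x ^ 2 * Real.exp (-A⁻¹ * x ^ 2)) := by
    ext x
    rw [NNReal.smul_def, smul_eq_mul,
      Real.coe_toNNReal _ (gaussianPDFReal_nonneg _ _ _), gaussianPDFReal,
      sub_zero, div_eq_mul_inv, hA]
    ring_nf
  rw [hsmul, integral_const_mul]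
  have hIoi : ∫ x in Set.Ioi (0:ℝ), x ^ 2 * Real.exp (-A⁻¹ * x ^ 2)
      = A⁻¹ ^ (-(3:ℝ)/2) * (1/2) * Real.Gamma (3/2) := by
    have h := integral_rpow_mul_exp_neg_mul_rpow (p := 2) (q := 2) (b := A⁻¹)
      two_pos (by norm_num) hb
    rw [show (-((2:ℝ)+1)/2 : ℝ) = -(3:ℝ)/2 by norm_num,
      show (((2:ℝ)+1)/2 : ℝ) = (3/2 : ℝ) by norm_num] at h
    rw [← h]
    refine setIntegral_congr_fun measurableSet_Ioi fun x hx => ?_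
    rw [h2rpow x]
  have hall : ∫ x : ℝ, x ^ 2 * Real.exp (-A⁻¹ * x ^ 2)
      = 2 * (A⁻¹ ^ (-(3:ℝ)/2) * (1/2) * Real.Gamma (3/2)) := by
    rw [← hIoi]
    have habs : (fun x : ℝ => x ^ 2 * Real.exp (-A⁻¹ * x ^ 2))
        = fun x : ℝ => |x| ^ 2 * Real.exp (-A⁻¹ * |x| ^ 2) := by
      ext x; rw [sq_abs]
    conv_lhs => rw [habs]
    rw [integral_comp_abs (f := fun y : ℝ => y ^ 2 * Real.exp (-A⁻¹ * y ^ 2))]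
  rw [hall]
  have hGamma : Real.Gamma (3/2) = √π / 2 := by
    rw [show (3/2 : ℝ) = 1/2 + 1 by norm_num, Real.Gamma_add_one (by norm_num),
      Real.Gamma_one_half_eq]
    ring
  have hpow : A⁻¹ ^ (-(3:ℝ)/2) = A * √A := by
    rw [Real.inv_rpow hA0.le, ← Real.rpow_neg hA0.le,
      show (-(-(3:ℝ)/2) : ℝ) = 1 + 1/2 by norm_num, Real.rpow_add hA0, Real.rpow_one,
      ← Real.sqrt_eq_rpow]
  have hsqrt : √(2 * π * (v:ℝ)) = √π * √A := by
    rw [show 2 * π * (v:ℝ) = π * A by rw [hA]; ring, Real.sqrt_mul Real.pi_pos.le]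
  rw [hGamma, hpow, hsqrt]
  have hπ : (0:ℝ) < √π := Real.sqrt_pos.mpr Real.pi_pos
  have hsA : (0:ℝ) < √A := Real.sqrt_pos.mpr hA0
  have hAsq : √A * √A = A := Real.mul_self_sqrt hA0.le
  field_simp
  rw [hA]

end Aux

section Cov

variable {Ω : Type*} [MeasurableSpace Ω] {μ : Measure Ω} [IsProbabilityMeasure μ]

lemma cov_sum_lemma {ι : Type*} [Fintype ι] {σ : ℝ} (hσ : 0 < σ)
    (η : ι → Ω → ℝ) (hmeas : ∀ p, Measurable (η p))
    (hindep : iIndepFun η μ)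
    (hgauss : ∀ p, Measure.map (η p) μ = gaussianReal 0 ⟨σ ^ 2, sq_nonneg σ⟩)
    (a b : ι → ℝ) :
    ∫ ω, (∑ p, a p * η p ω) * (∑ q, b q * η q ω) ∂μ = σ ^ 2 * ∑ p, a p * b p := by
  have hv : (⟨σ ^ 2, sq_nonneg σ⟩ : ℝ≥0) ≠ 0 := by
    intro h
    have h2 := congrArg NNReal.toReal h
    change σ ^ 2 = 0 at h2
    nlinarith
  have h2 : ∀ p, MemLp (η p) 2 μ := by
    intro p
    rw [memLp_two_iff_integrable_sq ((hmeas p).aestronglyMeasurable)]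
    have h := integrable_sq_gaussianReal hv
    rw [← hgauss p, integrable_map_measure (by fun_prop) (hmeas p).aemeasurable] at h
    exact h
  have hmean : ∀ p, ∫ ω, η p ω ∂μ = 0 := by
    intro p
    have h : ∫ x, x ∂(Measure.map (η p) μ) = ∫ ω, η p ω ∂μ :=
      integral_map (hmeas p).aemeasurable measurable_id.aestronglyMeasurable
    rw [hgauss p] at h
    rw [← h]
    exact _root_.integral_id_gaussianReal _
  have hsq : ∀ p, ∫ ω, η p ω * η p ω ∂μ = σ ^ 2 := by
    intro p
    have h : ∫ x, x ^ 2 ∂(Measure.map (η p) μ) = ∫ ω, (η p ω) ^ 2 ∂μ :=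
      integral_map (hmeas p).aemeasurable (by fun_prop)
    rw [hgauss p, integral_sq_gaussianReal hv] at h
    change σ ^ 2 = _ at h
    have h2 : ∫ ω, η p ω * η p ω ∂μ = ∫ ω, (η p ω) ^ 2 ∂μ := by
      simp_rw [pow_two]
    rw [h2, ← h]
  have hint : ∀ p q, Integrable (fun ω => η p ω * η q ω) μ := by
    intro p q
    have h := ((h2 q).smul (h2 p) (p := 2) (q := 2) (r := 1))
    have h' := memLp_one_iff_integrable.mp h
    exact h'
  have hcross : ∀ p q, p ≠ q → ∫ ω, η p ω * η q ω ∂μ = 0 := by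
    intro p q hpq
    have hind := hindep.indepFun hpq
    have h := hind.integral_fun_mul_eq_mul_integral (hmeas p).aestronglyMeasurable (hmeas q).aestronglyMeasurable
    rw [hmean p, zero_mul] at h
    exact h
  calc ∫ ω, (∑ p, a p * η p ω) * (∑ q, b q * η q ω) ∂μ
      = ∫ ω, ∑ p, ∑ q, (a p * b q) * (η p ω * η q ω) ∂μ := by
        congr 1
        ext ω
        rw [Finset.sum_mul_sum]
        exact Finset.sum_congr rfl fun p _ => Finset.sum_congr rfl fun q _ => by ring
    _ = ∑ p, ∑ q, (a p * b q) * ∫ ω, η p ω * η q ω ∂μ := by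
        rw [integral_finset_sum _ fun p _ =>
          integrable_finset_sum _ fun q _ => (hint p q).const_mul _]
        refine Finset.sum_congr rfl fun p _ => ?_
        rw [integral_finset_sum _ fun q _ => (hint p q).const_mul _]
        exact Finset.sum_congr rfl fun q _ => integral_const_mul _ _
    _ = ∑ p, a p * b p * σ ^ 2 := by
        refine Finset.sum_congr rfl fun p _ => ?_
        rw [Finset.sum_eq_single p]
        · rw [hsq p]
        · intro q _ hqp
          rw [hcross p q (Ne.symm hqp), mul_zero]
        · intro h
          exact absurd (Finset.mem_univ p) h
    _ = σ ^ 2 * ∑ p, a p * b p := by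
        rw [Finset.mul_sum]
        exact Finset.sum_congr rfl fun p _ => by ring

end Cov

/-- For an i.i.d. Gaussian family `(η_{ij})_{(i,j)∈B_r}` of mean `0` and variance `σ² > 0`,
the gradient estimates `D_x`, `D_y` and the Laplacian estimate `L` are pairwise
uncorrelated, `D_x` and `D_y` have variance `σ²/b(r)`, and `L` has variance
`V(r,σ) = (σ²/β(r)²) Σ_{(i,j)∈B_r} (α(r)+i²+j²)²`. -/
theorem discrete_white_noise_derivative_covariances
    {Ω : Type*} [MeasurableSpace Ω] (μ : Measure Ω) [IsProbabilityMeasure μ]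
    (r σ : ℝ) (hr : 0 < r) (hσ : 0 < σ)
    (η : {p : ℤ × ℤ // p ∈ discBall r} → Ω → ℝ)
    (hmeas : ∀ p, Measurable (η p))
    (hindep : iIndepFun η μ)
    (hgauss : ∀ p, Measure.map (η p) μ = gaussianReal 0 ⟨σ ^ 2, by positivity⟩)
    (Dx Dy L : Ω → ℝ)
    (hDx : Dx = fun ω => (1 / db r) * ∑ p ∈ (discBall r).attach, ((p : ℤ × ℤ).2 : ℝ) * η p ω)
    (hDy : Dy = fun ω => (1 / db r) * ∑ p ∈ (discBall r).attach, ((p : ℤ × ℤ).1 : ℝ) * η p ω)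
    (hL : L = fun ω => (1 / dbeta r) * ∑ p ∈ (discBall r).attach,
      (dalpha r + ((p : ℤ × ℤ).1 : ℝ) ^ 2 + ((p : ℤ × ℤ).2 : ℝ) ^ 2) * η p ω) :
    (∫ ω, Dx ω * Dy ω ∂μ) = 0 ∧
    (∫ ω, Dx ω * L ω ∂μ) = 0 ∧
    (∫ ω, Dy ω * L ω ∂μ) = 0 ∧
    (∫ ω, Dx ω ^ 2 ∂μ) = σ ^ 2 / db r ∧
    (∫ ω, Dy ω ^ 2 ∂μ) = σ ^ 2 / db r ∧
    (∫ ω, L ω ^ 2 ∂μ) =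
      (σ ^ 2 / (dbeta r) ^ 2) *
        ∑ p ∈ discBall r, (dalpha r + (p.1 : ℝ) ^ 2 + (p.2 : ℝ) ^ 2) ^ 2 := by
  classical
  have key : ∀ a b : {p : ℤ × ℤ // p ∈ discBall r} → ℝ,
      ∫ ω, (∑ p, a p * η p ω) * (∑ q, b q * η q ω) ∂μ = σ ^ 2 * ∑ p, a p * b p :=
    fun a b => cov_sum_lemma hσ η hmeas hindep hgauss a b
  have hsum : ∀ g : ℤ × ℤ → ℝ,
      ∑ p : {p : ℤ × ℤ // p ∈ discBall r}, g (p : ℤ × ℤ) = ∑ p ∈ discBall r, g p := by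
    intro g
    rw [Finset.univ_eq_attach, Finset.sum_attach]
  have hDx' : Dx = fun ω => ∑ p : {p : ℤ × ℤ // p ∈ discBall r},
      ((1 / db r) * ((p : ℤ × ℤ).2 : ℝ)) * η p ω := by
    rw [hDx]
    ext ω
    rw [Finset.univ_eq_attach, Finset.mul_sum]
    exact Finset.sum_congr rfl fun p _ => by ring
  have hDy' : Dy = fun ω => ∑ p : {p : ℤ × ℤ // p ∈ discBall r},
      ((1 / db r) * ((p : ℤ × ℤ).1 : ℝ)) * η p ω := by
    rw [hDy]
    ext ω
    rw [Finset.univ_eq_attach, Finset.mul_sum]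
    exact Finset.sum_congr rfl fun p _ => by ring
  have hL' : L = fun ω => ∑ p : {p : ℤ × ℤ // p ∈ discBall r},
      ((1 / dbeta r) * (dalpha r + ((p : ℤ × ℤ).1 : ℝ) ^ 2 + ((p : ℤ × ℤ).2 : ℝ) ^ 2)) * η p ω := by
    rw [hL]
    ext ω
    rw [Finset.univ_eq_attach, Finset.mul_sum]
    exact Finset.sum_congr rfl fun p _ => by ring
  have hj : ∑ p ∈ discBall r, ((1 / db r) * (p.2 : ℝ)) * ((1 / db r) * (p.2 : ℝ))
      = (1 / db r) ^ 2 * db r := by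
    rw [db, Finset.mul_sum]
    exact Finset.sum_congr rfl fun p _ => by ring
  refine ⟨?_, ?_, ?_, ?_, ?_, ?_⟩
  · rw [hDx', hDy', key]
    rw [hsum (fun p => ((1 / db r) * (p.2 : ℝ)) * ((1 / db r) * (p.1 : ℝ)))]
    rw [sum_discBall_oddSnd _ (fun p => by push_cast; ring), mul_zero]
  · rw [hDx', hL', key]
    rw [hsum (fun p => ((1 / db r) * (p.2 : ℝ)) *
      ((1 / dbeta r) * (dalpha r + (p.1 : ℝ) ^ 2 + (p.2 : ℝ) ^ 2)))]
    rw [sum_discBall_oddSnd _ (fun p => by push_cast; ring), mul_zero]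
  · rw [hDy', hL', key]
    rw [hsum (fun p => ((1 / db r) * (p.1 : ℝ)) *
      ((1 / dbeta r) * (dalpha r + (p.1 : ℝ) ^ 2 + (p.2 : ℝ) ^ 2)))]
    rw [sum_discBall_oddFst _ (fun p => by push_cast; ring), mul_zero]
  · have hconv : ∫ ω, Dx ω ^ 2 ∂μ = ∫ ω, Dx ω * Dx ω ∂μ := by simp_rw [pow_two]
    rw [hconv, hDx', key]
    rw [hsum (fun p => ((1 / db r) * (p.2 : ℝ)) * ((1 / db r) * (p.2 : ℝ)))]
    rw [hj]
    rcases eq_or_ne (db r) 0 with h | h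
    · rw [h]
      simp
    · field_simp
  · have hconv : ∫ ω, Dy ω ^ 2 ∂μ = ∫ ω, Dy ω * Dy ω ∂μ := by simp_rw [pow_two]
    rw [hconv, hDy', key]
    rw [hsum (fun p => ((1 / db r) * (p.1 : ℝ)) * ((1 / db r) * (p.1 : ℝ)))]
    rw [sum_discBall_swap (fun p => ((1 / db r) * (p.1 : ℝ)) * ((1 / db r) * (p.1 : ℝ)))]
    simp only
    rw [hj]
    rcases eq_or_ne (db r) 0 with h | h
    · rw [h]
      simp
    · field_simp
  · have hconv : ∫ ω, L ω ^ 2 ∂μ = ∫ ω, L ω * L ω ∂μ := by simp_rw [pow_two]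
    rw [hconv, hL', key]
    rw [hsum (fun p => ((1 / dbeta r) * (dalpha r + (p.1 : ℝ) ^ 2 + (p.2 : ℝ) ^ 2)) *
      ((1 / dbeta r) * (dalpha r + (p.1 : ℝ) ^ 2 + (p.2 : ℝ) ^ 2)))]
    have hS : ∑ p ∈ discBall r, ((1 / dbeta r) * (dalpha r + (p.1 : ℝ) ^ 2 + (p.2 : ℝ) ^ 2)) *
        ((1 / dbeta r) * (dalpha r + (p.1 : ℝ) ^ 2 + (p.2 : ℝ) ^ 2))
        = (1 / dbeta r ^ 2) *
          ∑ p ∈ discBall r, (dalpha r + (p.1 : ℝ) ^ 2 + (p.2 : ℝ) ^ 2) ^ 2 := by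
      rw [Finset.mul_sum]
      exact Finset.sum_congr rfl fun p _ => by ring
    rw [hS]
    ring
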